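/- Let X be a compact metric space consisting of {1/n : n ∈ ℕ} ∪ {0} ⊆ ℝ. Define g(x) = x and f(x) = x if x = 1/(2n) for some n, and f(x) = 0 otherwise. Then f and g are continuous, |f|² ≤ |g|² pointwise, but there is no continuous function h on X with f = g·h. -/
import Mathlib

open Filter Topology Set

private lemma nayak_interval {n m : ℕ} (hn : 0 < n) (hm : 0 < m)
    (h1 : 1/((n:ℝ)+1) < 1/m) (h2 : (1:ℝ)/m < 1/n + 1/(2*n^2)) : m = n := by
  have hn' : (0:ℝ) < n := by exact_mod_cast hn
  have hm' : (0:ℝ) < m := by exact_mod_cast hm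
  have hmn : (m:ℝ) < n + 1 := lt_of_one_div_lt_one_div (by positivity) h1
  have hmn' : m ≤ n := by exact_mod_cast Nat.lt_succ_iff.mp (by exact_mod_cast hmn)
  rcases eq_or_lt_of_le hmn' with h | h
  · exact h
  · exfalso
    have hmn2 : (m:ℝ) + 1 ≤ n := by exact_mod_cast h
    rw [div_add_div _ _ (ne_of_gt hn') (by positivity), div_lt_div_iff₀ hm' (by positivity)] at h2
    nlinarith [hm', hn']


/-- Nayak's counterexample: on `X = {1/n : n ∈ ℕ} ∪ {0}`, with `g x = x` and
`f x = x` when `x = 1/(2n)` and `f x = 0` otherwise, `f` and `g` are continuous,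
`|f|² ≤ |g|²` pointwise, but `f ≠ g·h` for every continuous `h` on `X`. -/
theorem no_continuous_douglas_factor
    (X : Set ℝ) (hX : X = {x : ℝ | (∃ n : ℕ, 0 < n ∧ x = 1 / n) ∨ x = 0})
    (f g : X → ℝ)
    (hg : ∀ x : X, g x = (x : ℝ))
    (hf₁ : ∀ x : X, (∃ n : ℕ, 0 < n ∧ (x : ℝ) = 1 / (2 * n)) → f x = (x : ℝ))
    (hf₂ : ∀ x : X, ¬(∃ n : ℕ, 0 < n ∧ (x : ℝ) = 1 / (2 * n)) → f x = 0) :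
    Continuous f ∧ Continuous g ∧ (∀ x : X, (f x) ^ 2 ≤ (g x) ^ 2) ∧
      ¬∃ h : X → ℝ, Continuous h ∧ ∀ x : X, f x = g x * h x := by
  have memX : ∀ y : X, (∃ n : ℕ, 0 < n ∧ (y:ℝ) = 1 / n) ∨ (y:ℝ) = 0 := by
    intro y
    exact (Set.ext_iff.mp hX _).mp y.2
  -- every nonzero point of X is isolated
  have isolated : ∀ x : X, (x : ℝ) ≠ 0 → 𝓝 x = pure x := by
    intro x hx0
    rcases memX x with ⟨n, hn, hxn⟩ | h
    · rw [← isOpen_singleton_iff_nhds_eq_pure]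
      have hn' : (0:ℝ) < n := by exact_mod_cast hn
      refine ⟨Ioo (1/((n:ℝ)+1)) (1/n + 1/(2*n^2)), isOpen_Ioo, ?_⟩
      ext y
      simp only [mem_preimage, mem_Ioo, mem_singleton_iff]
      constructor
      · rintro ⟨h1, h2⟩
        rcases memX y with ⟨m, hm, hym⟩ | h0
        · rw [hym] at h1 h2
          have hmn : m = n := nayak_interval hn hm h1 h2
          apply Subtype.ext
          rw [hym, hxn, hmn]
        · exfalso
          rw [h0] at h1
          have : (0:ℝ) < 1/((n:ℝ)+1) := by positivity
          linarith
      · rintro rfl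
        rw [hxn]
        constructor
        · exact one_div_lt_one_div_of_lt hn' (by linarith)
        · have : (0:ℝ) < 1/(2*(n:ℝ)^2) := by positivity
          linarith
    · exact absurd h hx0
  -- |f x| ≤ |x|
  have hfabs : ∀ x : X, |f x| ≤ |(x : ℝ)| := by
    intro x
    by_cases hx : ∃ n : ℕ, 0 < n ∧ (x : ℝ) = 1 / (2 * n)
    · rw [hf₁ x hx]
    · rw [hf₂ x hx]; simp [abs_nonneg]
  -- continuity of any u : X → ℝ with |u x| ≤ |x|
  have contOf : ∀ u : X → ℝ, (∀ x : X, |u x| ≤ |(x : ℝ)|) → Continuous u := by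
    intro u hu
    rw [continuous_iff_continuousAt]
    intro x
    by_cases hx : (x : ℝ) = 0
    · have hux : u x = 0 := by
        have h1 := hu x
        rw [hx, abs_zero] at h1
        exact abs_nonpos_iff.mp h1
      unfold ContinuousAt
      rw [hux]
      apply squeeze_zero_norm (a := fun y : X => |(y : ℝ)|)
      · intro y; simpa using hu y
      · have h2 : Filter.Tendsto (fun y : X => |(y : ℝ)|) (𝓝 x) (𝓝 |(x:ℝ)|) :=
          (continuous_subtype_val.abs.tendsto x)
        rwa [hx, abs_zero] at h2
    · unfold ContinuousAt
      rw [isolated x hx]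
      exact tendsto_pure_nhds u x
  have hcf : Continuous f := contOf f hfabs
  have hcg : Continuous g := by
    have : g = fun x : X => (x : ℝ) := funext hg
    rw [this]; exact continuous_subtype_val
  refine ⟨hcf, hcg, ?_, ?_⟩
  · intro x
    rw [hg x]
    have := hfabs x
    calc (f x)^2 = |f x|^2 := (sq_abs _).symm
      _ ≤ |(x:ℝ)|^2 := by apply pow_le_pow_left₀ (abs_nonneg _) this
      _ = (x:ℝ)^2 := sq_abs _
  · rintro ⟨h, hch, hfh⟩
    have h00 : (0:ℝ) ∈ X := (Set.ext_iff.mp hX _).mpr (Or.inr rfl)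
    have memA : ∀ k : ℕ, (1:ℝ)/(2*((k:ℝ)+1)) ∈ X := by
      intro k; exact (Set.ext_iff.mp hX _).mpr (Or.inl ⟨2*(k+1), by omega, by push_cast; ring⟩)
    have memB : ∀ k : ℕ, (1:ℝ)/(2*((k:ℝ)+1)+1) ∈ X := by
      intro k; exact (Set.ext_iff.mp hX _).mpr (Or.inl ⟨2*(k+1)+1, by omega, by push_cast; ring⟩)
    set x0 : X := ⟨0, h00⟩ with hx0
    set A : ℕ → X := fun k => ⟨1/(2*((k:ℝ)+1)), memA k⟩ with hA
    set B : ℕ → X := fun k => ⟨1/(2*((k:ℝ)+1)+1), memB k⟩ with hB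
    have hAco : ∀ k : ℕ, ((A k : ℝ)) = 1/(2*((k:ℝ)+1)) := fun k => rfl
    have hBco : ∀ k : ℕ, ((B k : ℝ)) = 1/(2*((k:ℝ)+1)+1) := fun k => rfl
    have hAne : ∀ k : ℕ, ((A k : ℝ)) ≠ 0 := by
      intro k; rw [hAco]; positivity
    have hBne : ∀ k : ℕ, ((B k : ℝ)) ≠ 0 := by
      intro k; rw [hBco]; positivity
    -- h (A k) = 1
    have hA1 : ∀ k, h (A k) = 1 := by
      intro k
      have hfa : f (A k) = (A k : ℝ) :=
        hf₁ (A k) ⟨k+1, k.succ_pos, by rw [hAco]; push_cast; ring⟩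
      have heq := hfh (A k)
      rw [hfa, hg] at heq
      exact (mul_left_cancel₀ (hAne k) (by rw [mul_one]; exact heq)).symm
    -- h (B k) = 0
    have hB0 : ∀ k, h (B k) = 0 := by
      intro k
      have hfb : f (B k) = 0 := by
        apply hf₂ (B k)
        rintro ⟨m, hm, hbm⟩
        rw [hBco] at hbm
        have hm' : (0:ℝ) < m := by exact_mod_cast hm
        rw [div_eq_div_iff (by positivity) (by positivity)] at hbm
        have : 2*(k+1)+1 = 2*m := by
          have : ((2*(k+1)+1 : ℕ) : ℝ) = ((2*m : ℕ) : ℝ) := by push_cast; linarith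
          exact_mod_cast this
        omega
      have heq := hfh (B k)
      rw [hfb, hg] at heq
      rcases mul_eq_zero.mp heq.symm with h' | h'
      · exact absurd h' (hBne k)
      · exact h'
    -- limits
    have hlim : ∀ (c : ℝ), 0 ≤ c → Filter.Tendsto (fun k : ℕ => (1:ℝ)/(2*((k:ℝ)+1)+c)) atTop (𝓝 0) := by
      intro c hc
      apply squeeze_zero_norm (a := fun k : ℕ => 1/((k:ℝ)+1))
      · intro k
        have hk : (0:ℝ) ≤ k := Nat.cast_nonneg k
        rw [Real.norm_eq_abs, abs_of_nonneg (by positivity)]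
        apply one_div_le_one_div_of_le (by positivity)
        linarith
      · have base : Filter.Tendsto (fun k : ℕ => (1:ℝ)/((k+1 : ℕ):ℝ)) atTop (𝓝 0) :=
          tendsto_one_div_atTop_nhds_zero_nat.comp (tendsto_add_atTop_nat 1)
        convert base using 2
        push_cast; ring
    have htendA : Filter.Tendsto A atTop (𝓝 x0) := by
      rw [tendsto_subtype_rng]
      have h0 : ((x0 : ℝ)) = 0 := rfl
      rw [h0]
      simpa [hAco] using by
        have := hlim 0 le_rfl
        simpa using this
    have htendB : Filter.Tendsto B atTop (𝓝 x0) := by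
      rw [tendsto_subtype_rng]
      have h0 : ((x0 : ℝ)) = 0 := rfl
      rw [h0]
      simpa [hBco] using hlim 1 zero_le_one
    have l1 : Filter.Tendsto (h ∘ A) atTop (𝓝 (h x0)) := (hch.tendsto x0).comp htendA
    have l0 : Filter.Tendsto (h ∘ B) atTop (𝓝 (h x0)) := (hch.tendsto x0).comp htendB
    have e1 : h x0 = 1 := by
      have h1 : Filter.Tendsto (fun _ : ℕ => (1:ℝ)) atTop (𝓝 (h x0)) := by
        convert l1 using 1; ext k; simp [Function.comp, hA1 k]
      exact tendsto_nhds_unique h1 tendsto_const_nhds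
    have e0 : h x0 = 0 := by
      have h1 : Filter.Tendsto (fun _ : ℕ => (0:ℝ)) atTop (𝓝 (h x0)) := by
        convert l0 using 1; ext k; simp [Function.comp, hB0 k]
      exact tendsto_nhds_unique h1 tendsto_const_nhds
    rw [e0] at e1
    norm_num at e1
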